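/- Let n ≥ 3, let L be the discrete periodic Laplacian, let σ ≥ 0 be a constant, let A_σ = I − σL, and let B ∈ ℝ^{n×n} be symmetric and nonzero. Let η ∈ (0, 1/‖B‖), where ‖B‖ is the spectral norm. Suppose x⁰ is a linear combination of eigenvectors of A_σ^{-1}B associated with positive eigenvalues, i.e. x⁰ = Σⱼ αⱼ pⱼ where A_σ^{-1}B pⱼ = λⱼ pⱼ with λⱼ > 0. Then the LSGD iterates x^{k+1} = (I − η A_σ^{-1} B) x^k converge to 0 as k → ∞; i.e., LSGD with constant σ converges to the saddle point of f(x) = (1/2)xᵀBx from any starting point in the span of the positive-eigenvalue eigenvectors of A_σ^{-1}B. -/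

import Mathlib

open Matrix Polynomial

/-- The discrete one-dimensional Laplacian with periodic boundary conditions:
the circulant matrix whose first column is `(-2, 1, 0, …, 0, 1)ᵀ`. -/
noncomputable def Lmat (n : ℕ) : Matrix (Fin n) (Fin n) ℝ :=
  Matrix.circulant (fun i : Fin n =>
    if (i : ℕ) = 0 then -2 else if (i : ℕ) = 1 ∨ (i : ℕ) = n - 1 then 1 else 0)

/-- The Laplacian smoothing matrix `A_σ = I - σ L`. -/
noncomputable def Amat (n : ℕ) (σ : ℝ) : Matrix (Fin n) (Fin n) ℝ :=
  1 - σ • Lmat n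

section
variable {n : ℕ} [NeZero n]

lemma sub_val_zero (i j : Fin n) : ((i - j : Fin n) : ℕ) = 0 ↔ j = i := by
  rw [← Fin.val_zero n, Fin.val_eq_val, sub_eq_zero, eq_comm]

lemma fin_val_one (hn : 3 ≤ n) : ((1 : Fin n) : ℕ) = 1 := by
  rw [Fin.val_one']; exact Nat.mod_eq_of_lt (by omega)

lemma sub_val_one (hn : 3 ≤ n) (i j : Fin n) : ((i - j : Fin n) : ℕ) = 1 ↔ j = i - 1 := by
  rw [← fin_val_one hn, Fin.val_eq_val, sub_eq_iff_eq_add, eq_comm, eq_sub_iff_add_eq, add_comm]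

lemma sub_val_last (hn : 3 ≤ n) (i j : Fin n) : ((i - j : Fin n) : ℕ) = n - 1 ↔ j = i + 1 := by
  have h1 : ((-1 : Fin n) : ℕ) = n - 1 := by
    rw [Fin.coe_neg, fin_val_one hn]
    exact Nat.mod_eq_of_lt (by omega)
  rw [← h1, Fin.val_eq_val, sub_eq_iff_eq_add]
  exact ⟨fun h => by rw [h]; abel, fun h => by rw [h]; abel⟩

lemma Lmat_mulVec (hn : 3 ≤ n) (v : Fin n → ℝ) (i : Fin n) :
    (Lmat n).mulVec v i = v (i - 1) + v (i + 1) - 2 * v i := by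
  have hone : (1 : Fin n) ≠ 0 := by
    intro h
    have := congrArg Fin.val h
    rw [fin_val_one hn, Fin.val_zero] at this; omega
  have hd1 : i - 1 ≠ i := fun h => hone (by
    have := sub_eq_iff_eq_add.mp h; linear_combination (norm := abel) -this)
  have hd2 : i + 1 ≠ i := fun h => hone (by linear_combination (norm := abel) h)
  have hd3 : i - 1 ≠ i + 1 := by
    intro h
    have h2 : (1 : Fin n) + 1 = 0 := by linear_combination (norm := abel) -h
    have := congrArg Fin.val h2
    rw [Fin.val_add, fin_val_one hn, Fin.val_zero, Nat.mod_eq_of_lt (by omega)] at this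
    omega
  unfold Lmat
  rw [Matrix.mulVec, dotProduct]
  simp only [Matrix.circulant_apply]
  have key : ∀ j : Fin n,
      (if ((i - j : Fin n) : ℕ) = 0 then (-2:ℝ) else
        if ((i - j : Fin n) : ℕ) = 1 ∨ ((i - j : Fin n) : ℕ) = n - 1 then 1 else 0) * v j
      = (if j = i then (-2) * v i else 0) + (if j = i - 1 then v (i-1) else 0)
        + (if j = i + 1 then v (i+1) else 0) := by
    intro j
    simp only [sub_val_zero, sub_val_one hn, sub_val_last hn]
    by_cases h1 : j = i <;> by_cases h2 : j = i - 1 <;> by_cases h3 : j = i + 1 <;>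
      simp_all <;> ring
  rw [Finset.sum_congr rfl fun j _ => key j]
  rw [Finset.sum_add_distrib, Finset.sum_add_distrib,
    Finset.sum_ite_eq' Finset.univ i, Finset.sum_ite_eq' Finset.univ (i-1),
    Finset.sum_ite_eq' Finset.univ (i+1)]
  simp; ring

lemma Lmat_quadform (hn : 3 ≤ n) (v : Fin n → ℝ) : v ⬝ᵥ (Lmat n).mulVec v ≤ 0 := by
  have : v ⬝ᵥ (Lmat n).mulVec v
      = (∑ i, v i * v (i - 1)) + (∑ i, v i * v (i + 1)) - 2 * ∑ i, v i ^ 2 := by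
    rw [dotProduct, Finset.mul_sum, ← Finset.sum_add_distrib, ← Finset.sum_sub_distrib]
    exact Finset.sum_congr rfl fun i _ => by rw [Lmat_mulVec hn]; ring
  rw [this]
  set S := ∑ i, v i ^ 2 with hS
  have hS0 : 0 ≤ S := Finset.sum_nonneg fun i _ => sq_nonneg _
  have e1 : ∑ i : Fin n, v (i - 1) ^ 2 = S := by
    exact Fintype.sum_equiv (Equiv.subRight (1 : Fin n)) _ _ (fun i => rfl)
  have e2 : ∑ i : Fin n, v (i + 1) ^ 2 = S := by
    exact Fintype.sum_equiv (Equiv.addRight (1 : Fin n)) _ _ (fun i => rfl)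
  have c1 : (∑ i, v i * v (i - 1)) ^ 2 ≤ S * S := by
    have := Finset.sum_mul_sq_le_sq_mul_sq Finset.univ v (fun i => v (i - 1))
    simpa [e1, ← hS] using this
  have c2 : (∑ i, v i * v (i + 1)) ^ 2 ≤ S * S := by
    have := Finset.sum_mul_sq_le_sq_mul_sq Finset.univ v (fun i => v (i + 1))
    simpa [e2, ← hS] using this
  have le1 : (∑ i, v i * v (i - 1)) ≤ S := by nlinarith [c1, hS0]
  have le2 : (∑ i, v i * v (i + 1)) ≤ S := by nlinarith [c2, hS0]
  linarith

lemma Amat_quadform (hn : 3 ≤ n) {σ : ℝ} (hσ : 0 ≤ σ) (v : Fin n → ℝ) :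
    v ⬝ᵥ v ≤ v ⬝ᵥ (Amat n σ).mulVec v := by
  unfold Amat
  rw [sub_mulVec, dotProduct_sub, one_mulVec, smul_mulVec, dotProduct_smul]
  have := mul_nonpos_of_nonneg_of_nonpos hσ (Lmat_quadform hn v)
  simp only [smul_eq_mul]
  linarith

lemma Amat_isUnit (hn : 3 ≤ n) {σ : ℝ} (hσ : 0 ≤ σ) : IsUnit (Amat n σ) := by
  rw [← Matrix.mulVec_injective_iff_isUnit]
  intro v w h
  have h0 : (Amat n σ).mulVec (v - w) = 0 := by
    rw [mulVec_sub, h, sub_self]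
  have h1 : (v - w) ⬝ᵥ (v - w) ≤ 0 := by
    have := Amat_quadform hn hσ (v - w)
    rwa [h0, dotProduct_zero] at this
  have h2 : (v - w) ⬝ᵥ (v - w) = 0 :=
    le_antisymm h1 (Finset.sum_nonneg fun i _ => mul_self_nonneg _)
  have := (dotProduct_self_eq_zero).mp h2
  exact sub_eq_zero.mp this

lemma eigen_bound (hn : 3 ≤ n) {σ : ℝ} (hσ : 0 ≤ σ) {B : Matrix (Fin n) (Fin n) ℝ}
    {p : Fin n → ℝ} {lam : ℝ} (hp : p ≠ 0) (hlam : 0 < lam)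
    (heig : ((Amat n σ)⁻¹ * B).mulVec p = lam • p) :
    lam ≤ ‖Matrix.toEuclideanCLM (𝕜 := ℝ) (n := Fin n) B‖ := by
  have hA := Amat_isUnit hn hσ
  have hAdet : IsUnit (Amat n σ).det := (Matrix.isUnit_iff_isUnit_det _).mp hA
  have hBp : B.mulVec p = lam • (Amat n σ).mulVec p := by
    have hABB : Amat n σ * ((Amat n σ)⁻¹ * B) = B := by
      rw [← Matrix.mul_assoc, Matrix.mul_nonsing_inv _ hAdet, Matrix.one_mul]
    rw [← hABB, ← Matrix.mulVec_mulVec, heig, mulVec_smul]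
  have key1 : lam * (p ⬝ᵥ p) ≤ p ⬝ᵥ B.mulVec p := by
    rw [hBp, dotProduct_smul, smul_eq_mul]
    exact mul_le_mul_of_nonneg_left (Amat_quadform hn hσ p) hlam.le
  -- Euclidean estimates
  set u : EuclideanSpace ℝ (Fin n) := (WithLp.equiv 2 _).symm p with hu
  have hBu : Matrix.toEuclideanCLM (𝕜 := ℝ) (n := Fin n) B u
      = (WithLp.equiv 2 _).symm (B.mulVec p) := Matrix.toEuclideanCLM_toLp B p
  have hinner : p ⬝ᵥ B.mulVec p = inner ℝ u (Matrix.toEuclideanCLM (𝕜 := ℝ) (n := Fin n) B u) := by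
    rw [hBu, PiLp.inner_apply]
    simp only [RCLike.inner_apply, starRingEnd_apply, star_trivial]
    exact Finset.sum_congr rfl fun i _ => mul_comm _ _
  have hnorm : ‖u‖ ^ 2 = p ⬝ᵥ p := by
    rw [← real_inner_self_eq_norm_sq, PiLp.inner_apply]
    simp only [RCLike.inner_apply, starRingEnd_apply, star_trivial]
    rfl
  have key2 : p ⬝ᵥ B.mulVec p ≤ ‖Matrix.toEuclideanCLM (𝕜 := ℝ) (n := Fin n) B‖ * (p ⬝ᵥ p) := by
    rw [hinner, ← hnorm]
    calc inner ℝ u (Matrix.toEuclideanCLM (𝕜 := ℝ) (n := Fin n) B u)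
        ≤ ‖u‖ * ‖Matrix.toEuclideanCLM (𝕜 := ℝ) (n := Fin n) B u‖ := real_inner_le_norm _ _
      _ ≤ ‖u‖ * (‖Matrix.toEuclideanCLM (𝕜 := ℝ) (n := Fin n) B‖ * ‖u‖) :=
          mul_le_mul_of_nonneg_left (ContinuousLinearMap.le_opNorm _ _) (norm_nonneg _)
      _ = ‖Matrix.toEuclideanCLM (𝕜 := ℝ) (n := Fin n) B‖ * ‖u‖ ^ 2 := by ring
  have hpp : 0 < p ⬝ᵥ p := by
    rcases lt_or_eq_of_le (Finset.sum_nonneg fun i _ => mul_self_nonneg (p i) :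
      (0:ℝ) ≤ p ⬝ᵥ p) with h | h
    · exact h
    · exact absurd (dotProduct_self_eq_zero.mp h.symm) hp
  have := key1.trans key2
  exact le_of_mul_le_mul_right (by linarith) hpp
end

theorem stmt16 (n : ℕ) (hn : 3 ≤ n) (σ : ℝ) (hσ : 0 ≤ σ)
    (B : Matrix (Fin n) (Fin n) ℝ) (hBsymm : B.IsSymm) (hB0 : B ≠ 0) (η : ℝ)
    -- `η ∈ (0, 1/‖B‖)` where `‖B‖` is the spectral norm of `B`:
    (hη : η ∈ Set.Ioo (0 : ℝ) (1 / ‖Matrix.toEuclideanCLM (𝕜 := ℝ) (n := Fin n) B‖))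
    (x : ℕ → Fin n → ℝ)
    -- `x⁰` is a linear combination of eigenvectors of `A_σ⁻¹B` associated with
    -- positive eigenvalues:
    (hx0 : x 0 ∈ Submodule.span ℝ
      {p : Fin n → ℝ | ∃ lam : ℝ, 0 < lam ∧ ((Amat n σ)⁻¹ * B).mulVec p = lam • p})
    -- LSGD with constant `σ` applied to `f(x) = ½ xᵀBx`:
    (hrec : ∀ k, x (k + 1) = x k - η • ((Amat n σ)⁻¹ * B).mulVec (x k)) :
    Filter.Tendsto x Filter.atTop (nhds 0) := by
  haveI : NeZero n := ⟨by omega⟩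
  obtain ⟨hη0, hη1⟩ := hη
  set nB := ‖Matrix.toEuclideanCLM (𝕜 := ℝ) (n := Fin n) B‖ with hnB
  have hnB0 : 0 < nB := by
    rcases lt_or_eq_of_le (norm_nonneg (Matrix.toEuclideanCLM (𝕜 := ℝ) (n := Fin n) B)) with h | h
    · exact h
    · exfalso
      have h1 : (1:ℝ) / nB ≤ 0 := by rw [hnB, ← h]; simp
      linarith
  have hηB : η * nB < 1 := (lt_div_iff₀ hnB0).mp hη1
  set M := (Amat n σ)⁻¹ * B with hM
  set T : (Fin n → ℝ) →ₗ[ℝ] (Fin n → ℝ) := LinearMap.id - η • M.mulVecLin with hT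
  have hTapply : ∀ v, T v = v - η • M.mulVec v := fun v => rfl
  have hxk : ∀ k, x k = (T ^ k) (x 0) := by
    intro k
    induction k with
    | zero => simp
    | succ k ih =>
      rw [hrec k, ih, pow_succ']
      rfl
  rw [show x = fun k => (T ^ k) (x 0) from funext hxk]
  refine Submodule.span_induction
    (p := fun v _ => Filter.Tendsto (fun k => (T ^ k) v) Filter.atTop (nhds 0))
    ?_ ?_ ?_ ?_ hx0
  · intro v hv
    obtain ⟨lam, hlam, heig⟩ := hv
    have hTk : ∀ k, (T ^ k) v = (1 - η * lam) ^ k • v := by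
      intro k
      induction k with
      | zero => simp
      | succ k ih =>
        rw [pow_succ', Module.End.mul_apply, ih, LinearMap.map_smul, hTapply,
          show M.mulVec v = lam • v from heig, pow_succ]
        module
    simp only [hTk]
    rcases eq_or_ne v 0 with rfl | hv0
    · simp only [smul_zero]; exact tendsto_const_nhds
    · have hlamB : lam ≤ nB := eigen_bound hn hσ hv0 hlam heig
      have habs : |1 - η * lam| < 1 := by
        rw [abs_lt]
        constructor
        · nlinarith
        · nlinarith
      have := tendsto_pow_atTop_nhds_zero_of_abs_lt_one habs
      simpa using this.smul_const v
  · simp only [map_zero]; exact tendsto_const_nhds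
  · intro u w _ _ ihu ihw; simpa using ihu.add ihw
  · intro a u _ ihu; simpa using ihu.const_smul a
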